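/- arXiv:1301.2987 — 4 statements merged into one kernel-verified Lean document; each statement's English description precedes it below -/
import Mathlib

section
/- Let H > 0 and ε > 0 with 2ε ≤ H, and let K > 0 satisfy K·tanh(K/(2ε)) = H. Define k^ε(x) = K·tanh(K(1−x)/(2ε)). Then for every x ∈ [0,1], |(k^ε)'(x)| ≤ H²/ε. -/
open Real

lemma tanh_hasDerivAt (y : ℝ) : HasDerivAt Real.tanh (1 / Real.cosh y ^ 2) y := by
  have h := (Real.hasDerivAt_sinh y).div (Real.hasDerivAt_cosh y)
    (ne_of_gt (Real.cosh_pos y))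
  have heq : (Real.cosh y * Real.cosh y - Real.sinh y * Real.sinh y) / Real.cosh y ^ 2
      = 1 / Real.cosh y ^ 2 := by
    have := Real.cosh_sq_sub_sinh_sq y
    rw [show Real.cosh y * Real.cosh y - Real.sinh y * Real.sinh y
        = Real.cosh y ^ 2 - Real.sinh y ^ 2 by ring, this]
  have : HasDerivAt (fun x => Real.sinh x / Real.cosh x) (1 / Real.cosh y ^ 2) y := by
    rw [← heq]; exact h
  convert this using 1
  funext x
  exact Real.tanh_eq_sinh_div_cosh x

lemma tanh_lt_one' (x : ℝ) : Real.tanh x < 1 := by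
  rw [Real.tanh_eq_sinh_div_cosh, div_lt_one (Real.cosh_pos x)]
  rw [Real.sinh_eq, Real.cosh_eq]
  have := Real.exp_pos (-x)
  linarith

lemma tanh_mono {a b : ℝ} (hab : a ≤ b) : Real.tanh a ≤ Real.tanh b := by
  rw [Real.tanh_eq_sinh_div_cosh, Real.tanh_eq_sinh_div_cosh,
    div_le_div_iff₀ (Real.cosh_pos a) (Real.cosh_pos b)]
  have h : Real.sinh (a - b) ≤ 0 := by
    rw [← Real.sinh_zero]
    exact Real.sinh_le_sinh.2 (by linarith)
  rw [Real.sinh_sub] at h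
  linarith

lemma two_tanh_one_sq : 1 ≤ 2 * Real.tanh 1 ^ 2 := by
  have he : (2.7 : ℝ) < Real.exp 1 := by
    have := Real.exp_one_gt_d9; linarith
  have hepos : (0 : ℝ) < Real.exp 1 := Real.exp_pos 1
  rw [Real.tanh_eq_sinh_div_cosh, Real.sinh_eq, Real.cosh_eq]
  have hcosh : (0:ℝ) < (Real.exp 1 + Real.exp (-1)) / 2 := by positivity
  have hinv : Real.exp (-1) = (Real.exp 1)⁻¹ := Real.exp_neg 1
  rw [hinv, div_pow, mul_div_assoc', one_le_div (by positivity)]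
  have hinvpos : (0:ℝ) < (Real.exp 1)⁻¹ := by positivity
  have hmul : Real.exp 1 * (Real.exp 1)⁻¹ = 1 := mul_inv_cancel₀ (ne_of_gt hepos)
  have hinvlt : (Real.exp 1)⁻¹ < 1/2.7 := by
    rw [inv_lt_comm₀ hepos (by norm_num)]
    calc (1/2.7 : ℝ)⁻¹ = 2.7 := by norm_num
    _ < Real.exp 1 := he
  nlinarith [sq_nonneg (Real.exp 1 - (Real.exp 1)⁻¹), sq_nonneg (Real.exp 1 + (Real.exp 1)⁻¹)]

/-- If `2ε ≤ H` and `K > 0` satisfies `K·tanh(K/(2ε)) = H`, then the steady state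
`k^ε(x) = K·tanh(K(1−x)/(2ε))` has derivative bounded by `H²/ε` on `[0,1]`. -/
theorem deriv_kEps_bound (H ε K : ℝ) (hH : 0 < H) (hε : 0 < ε) (h2ε : 2 * ε ≤ H)
    (hK : 0 < K) (hKH : K * Real.tanh (K / (2 * ε)) = H)
    (k : ℝ → ℝ)
    (kdef : ∀ x : ℝ, k x = K * Real.tanh (K * (1 - x) / (2 * ε))) :
    ∀ x ∈ Set.Icc (0 : ℝ) 1, |deriv k x| ≤ H ^ 2 / ε := by
  -- K² ≤ 2 H²
  have htanh_lt : Real.tanh (K / (2 * ε)) < 1 := tanh_lt_one' _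
  have hHK : H ≤ K := by nlinarith
  have harg : (1 : ℝ) ≤ K / (2 * ε) := by
    rw [le_div_iff₀ (by linarith)]; linarith
  have ht1 : Real.tanh 1 ≤ Real.tanh (K / (2 * ε)) := tanh_mono harg
  have ht1pos : 0 < Real.tanh 1 := by
    rw [Real.tanh_eq_sinh_div_cosh]
    exact div_pos (Real.sinh_pos_iff.2 one_pos) (Real.cosh_pos 1)
  have hKt : K * Real.tanh 1 ≤ H := by nlinarith
  have hsq : (K * Real.tanh 1) ^ 2 ≤ H ^ 2 := by nlinarith [mul_pos hK ht1pos]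
  have hKsq : K ^ 2 ≤ 2 * H ^ 2 := by
    nlinarith [mul_le_mul_of_nonneg_left two_tanh_one_sq (sq_nonneg K)]
  intro x _
  -- compute the derivative
  have hkfun : k = fun x => K * Real.tanh (K * (1 - x) / (2 * ε)) := funext kdef
  have hinner : HasDerivAt (fun y : ℝ => K * (1 - y) / (2 * ε)) (K * (-1) / (2 * ε)) x :=
    (((hasDerivAt_id x).const_sub 1).const_mul K).div_const (2 * ε)
  have houter := (tanh_hasDerivAt (K * (1 - x) / (2 * ε))).comp x hinner
  have hk : HasDerivAt k
      (K * (1 / Real.cosh (K * (1 - x) / (2 * ε)) ^ 2 * (K * (-1) / (2 * ε)))) x := by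
    rw [hkfun]; exact houter.const_mul K
  rw [hk.deriv]
  have hcosh := Real.one_le_cosh (K * (1 - x) / (2 * ε))
  have hcoshpos := Real.cosh_pos (K * (1 - x) / (2 * ε))
  set c := Real.cosh (K * (1 - x) / (2 * ε)) with hc
  have heq : K * (1 / c ^ 2 * (K * (-1) / (2 * ε))) = -(K ^ 2 / (2 * ε) * (1 / c ^ 2)) := by
    ring
  rw [heq, abs_neg, abs_of_nonneg (by positivity)]
  have h1 : 1 / c ^ 2 ≤ 1 := by
    rw [div_le_one (by positivity)]; nlinarith
  calc K ^ 2 / (2 * ε) * (1 / c ^ 2) ≤ K ^ 2 / (2 * ε) * 1 := by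
        apply mul_le_mul_of_nonneg_left h1 (by positivity)
    _ ≤ H ^ 2 / ε := by
        rw [mul_one, div_le_div_iff₀ (by linarith) hε]; nlinarith
end

section
/- Let T > 0 and H > 0, and let Z⁰ : ℝ → ℝ be of class C¹ on [0,1] with Z⁰(0) = 1. For n ≥ 0 set λ_n = (n + 1/2)π, f_n(x) = √2·sin(λ_n x), H^ε(x) = cosh(H(1−x)/(2ε))/cosh(H/(2ε)), and α_n(ε) = ∫₀¹ (Z⁰(x) − H^ε(x))·f_n(x) dx. Then there exists ε₀ > 0 such that for all ε with 0 < ε ≤ ε₀: ∑_{n=0}^{∞} λ_n²·α_n(ε)²·exp(−2ε(λ_n² + H²/(4ε²))·T) ≤ (1/ε + 1)·(16 + 2∫₀¹ ((Z⁰)'(x))² dx)·exp(−H²T/(2ε)). -/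
/-!
With `g = Z⁰ - H^ε` one has `g(0) = 0` and `cos λ_n = 0`, so integrating by parts against
`sin (λ_n x)` gives `λ_n α_n = √2 ∫₀¹ g' cos (λ_n x)`. Since `H^ε` is nonincreasing from `1` to
`1 / cosh (H/(2ε)) > 0`, the part `∫ (H^ε)' cos (λ_n x)` is at most `1` in absolute value, and
Cauchy–Schwarz with `∫₀¹ cos² (λ_n x) = 1/2` bounds the other part; hence
`λ_n² α_n² ≤ 2 ∫₀¹ ((Z⁰)')² + 4`, uniformly in `n` and `ε`. The factor
`exp (-2ε(λ_n² + H²/(4ε²))T)` splits off `exp (-H²T/(2ε))` and leaves `exp (-2εT n²)`, whose sum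
over `n` is at most `1 + √(π/(2εT))/2` by comparison with the Gaussian integral, and this is
`≤ 1 + 1/ε` as soon as `ε ≤ T`.
-/

open Real MeasureTheory Set

lemma sq_integral_mul_le_integral_sq_mul_integral_sq {f g : ℝ → ℝ} {a b : ℝ} (hab : a ≤ b)
    (hf : ContinuousOn f (uIcc a b)) (hg : ContinuousOn g (uIcc a b)) :
    (∫ x in a..b, f x * g x) ^ 2 ≤ (∫ x in a..b, f x ^ 2) * ∫ x in a..b, g x ^ 2 := by
  have hquad : ∀ s : ℝ, 0 ≤ (∫ x in a..b, g x ^ 2) * (s * s) + 2 * (∫ x in a..b, f x * g x) * s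
      + ∫ x in a..b, f x ^ 2 := by
    intro s
    have hexpand : ∫ x in a..b, (s * g x + f x) ^ 2 = ∫ x in a..b,
        ((s * s) * g x ^ 2 + (2 * s) * (f x * g x) + f x ^ 2) :=
      intervalIntegral.integral_congr fun x _ => by ring
    have hint : 0 ≤ ∫ x in a..b, (s * g x + f x) ^ 2 :=
      intervalIntegral.integral_nonneg hab fun x _ => sq_nonneg _
    rw [hexpand, intervalIntegral.integral_add, intervalIntegral.integral_add,
      intervalIntegral.integral_const_mul, intervalIntegral.integral_const_mul] at hint
    · linarith
    all_goals exact ContinuousOn.intervalIntegrable (by fun_prop)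
  have := discrim_le_zero hquad
  rw [discrim] at this
  linarith

lemma integral_cos_mul_sq_of_cos_eq_zero {l : ℝ} (hl : l ≠ 0) (hcos : cos l = 0) :
    ∫ x in (0 : ℝ)..1, cos (l * x) ^ 2 = 1 / 2 := by
  rw [intervalIntegral.integral_comp_mul_left (fun u => cos u ^ 2) hl, mul_zero, mul_one,
    integral_cos_sq, hcos]
  simp only [zero_mul, cos_zero, sin_zero, mul_zero, sub_self, zero_add, sub_zero, smul_eq_mul,
    one_div]
  field_simp

lemma integral_mul_sin_eq_integral_deriv_mul_cos_div {g g' : ℝ → ℝ} {l : ℝ} (hl : l ≠ 0)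
    (hcos : cos l = 0) (hg : ∀ x ∈ Icc (0 : ℝ) 1, HasDerivAt g (g' x) x)
    (hg' : IntervalIntegrable g' volume 0 1) (hg0 : g 0 = 0) :
    ∫ x in (0 : ℝ)..1, g x * sin (l * x) = (∫ x in (0 : ℝ)..1, g' x * cos (l * x)) / l := by
  have hv : ∀ x ∈ uIcc (0 : ℝ) 1, HasDerivAt (fun y => -cos (l * y) / l) (sin (l * x)) x :=
    fun x _ => ((((hasDerivAt_id x).const_mul l).cos).neg.div_const l).congr_deriv
      (by field_simp; simp only [id_eq])
  rw [intervalIntegral.integral_mul_deriv_eq_deriv_mul (by rwa [uIcc_of_le zero_le_one]) hv hg'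
    (by apply Continuous.intervalIntegrable; fun_prop)]
  simp only [mul_one, hcos, hg0]
  rw [← intervalIntegral.integral_div]
  simp only [neg_div, mul_neg, intervalIntegral.integral_neg, mul_div_assoc]
  ring

lemma abs_integral_deriv_mul_le_sub_of_nonpos {φ φ' h : ℝ → ℝ} {a b : ℝ} (hab : a ≤ b)
    (hφ : ∀ x ∈ Icc a b, HasDerivAt φ (φ' x) x) (hφ' : ContinuousOn φ' (Icc a b))
    (hφ'_nonpos : ∀ x ∈ Icc a b, φ' x ≤ 0) (hh : ContinuousOn h (Icc a b))
    (hh_le : ∀ x ∈ Icc a b, |h x| ≤ 1) :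
    |∫ x in a..b, φ' x * h x| ≤ φ a - φ b := by
  have hint : IntervalIntegrable φ' volume a b :=
    (hφ'.mono (uIcc_of_le hab).subset).intervalIntegrable
  calc |∫ x in a..b, φ' x * h x| ≤ ∫ x in a..b, |φ' x * h x| :=
        intervalIntegral.abs_integral_le_integral_abs hab
    _ ≤ ∫ x in a..b, -φ' x := by
        refine intervalIntegral.integral_mono_on hab ?_ hint.neg fun x hx => ?_
        · exact ((hφ'.mul hh).mono (uIcc_of_le hab).subset).intervalIntegrable.abs
        · rw [abs_mul, abs_of_nonpos (hφ'_nonpos x hx)]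
          exact mul_le_of_le_one_right (neg_nonneg.2 (hφ'_nonpos x hx)) (hh_le x hx)
    _ = φ a - φ b := by
        rw [intervalIntegral.integral_neg, intervalIntegral.integral_eq_sub_of_hasDerivAt
          (by rwa [uIcc_of_le hab]) hint]
        ring

lemma sq_mul_sq_integral_sub_mul_sqrt_two_sin_le {u u' φ φ' : ℝ → ℝ} {l : ℝ} (hl : l ≠ 0)
    (hcos : cos l = 0) (hu : ∀ x ∈ Icc (0 : ℝ) 1, HasDerivAt u (u' x) x)
    (hu' : ContinuousOn u' (Icc 0 1)) (hφ : ∀ x ∈ Icc (0 : ℝ) 1, HasDerivAt φ (φ' x) x)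
    (hφ' : ContinuousOn φ' (Icc 0 1)) (hφ'_nonpos : ∀ x ∈ Icc (0 : ℝ) 1, φ' x ≤ 0)
    (h0 : u 0 = φ 0) :
    l ^ 2 * (∫ x in (0 : ℝ)..1, (u x - φ x) * (√2 * sin (l * x))) ^ 2
      ≤ 2 * (∫ x in (0 : ℝ)..1, u' x ^ 2) + 4 * (φ 0 - φ 1) ^ 2 := by
  have hI01 : uIcc (0 : ℝ) 1 = Icc 0 1 := uIcc_of_le zero_le_one
  have hcos_cont : ContinuousOn (fun x => cos (l * x)) (Icc 0 1) := by fun_prop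
  set X := ∫ x in (0 : ℝ)..1, u' x * cos (l * x)
  set Y := ∫ x in (0 : ℝ)..1, φ' x * cos (l * x)
  have hcoeff : ∫ x in (0 : ℝ)..1, (u x - φ x) * (√2 * sin (l * x)) = √2 * ((X - Y) / l) := by
    have hibp := integral_mul_sin_eq_integral_deriv_mul_cos_div (g := fun x => u x - φ x)
      (g' := fun x => u' x - φ' x) hl hcos (fun x hx => (hu x hx).sub (hφ x hx))
      ((hu'.sub hφ').mono hI01.subset).intervalIntegrable (sub_eq_zero.2 h0)
    have hsplit : ∫ x in (0 : ℝ)..1, (u' x - φ' x) * cos (l * x) = X - Y := by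
      simp_rw [sub_mul]
      exact intervalIntegral.integral_sub ((hu'.mul hcos_cont).mono hI01.subset).intervalIntegrable
        ((hφ'.mul hcos_cont).mono hI01.subset).intervalIntegrable
    rw [← hsplit, ← hibp, ← intervalIntegral.integral_const_mul]
    exact intervalIntegral.integral_congr fun x _ => by ring
  have hX : X ^ 2 ≤ (∫ x in (0 : ℝ)..1, u' x ^ 2) / 2 := by
    have := sq_integral_mul_le_integral_sq_mul_integral_sq zero_le_one (hI01 ▸ hu')
      (hI01 ▸ hcos_cont)
    rwa [integral_cos_mul_sq_of_cos_eq_zero hl hcos, ← div_eq_mul_one_div] at this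
  have hY : |Y| ≤ φ 0 - φ 1 :=
    abs_integral_deriv_mul_le_sub_of_nonpos zero_le_one hφ hφ' hφ'_nonpos hcos_cont
      fun x _ => abs_cos_le_one _
  have hY2 : Y ^ 2 ≤ (φ 0 - φ 1) ^ 2 := sq_le_sq' (abs_le.1 hY).1 (abs_le.1 hY).2
  calc l ^ 2 * (∫ x in (0 : ℝ)..1, (u x - φ x) * (√2 * sin (l * x))) ^ 2 = 2 * (X - Y) ^ 2 := by
        rw [hcoeff, mul_pow, div_pow, sq_sqrt zero_le_two]
        field_simp
    _ ≤ 2 * (∫ x in (0 : ℝ)..1, u' x ^ 2) + 4 * (φ 0 - φ 1) ^ 2 := by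
        nlinarith [sq_nonneg (X + Y)]

lemma antitoneOn_exp_neg_mul_sq {b : ℝ} (hb : 0 ≤ b) :
    AntitoneOn (fun x : ℝ => exp (-b * x ^ 2)) (Ici 0) := by
  intro x hx y _ hxy
  simp only [neg_mul, exp_le_exp, neg_le_neg_iff]
  gcongr

lemma sum_range_exp_neg_mul_sq_le {b : ℝ} (hb : 0 < b) (N : ℕ) :
    ∑ n ∈ Finset.range N, exp (-b * (n : ℝ) ^ 2) ≤ 1 + √(π / b) / 2 := by
  cases N with
  | zero => simp only [Finset.range_zero, Finset.sum_empty]; positivity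
  | succ N =>
    have hsum : ∑ i ∈ Finset.range N, exp (-b * ((0 : ℝ) + ↑(i + 1)) ^ 2)
        ≤ ∫ x in (0 : ℝ)..0 + N, exp (-b * x ^ 2) :=
      ((antitoneOn_exp_neg_mul_sq hb.le).mono fun x hx => hx.1).sum_le_integral
    have htail : ∫ x in (0 : ℝ)..N, exp (-b * x ^ 2) ≤ ∫ x in Ioi 0, exp (-b * x ^ 2) := by
      rw [intervalIntegral.integral_of_le N.cast_nonneg]
      exact setIntegral_mono_set (integrable_exp_neg_mul_sq hb).integrableOn
        (Filter.Eventually.of_forall fun x => (exp_pos _).le) Ioc_subset_Ioi_self.eventuallyLE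
    rw [Finset.sum_range_succ', ← integral_gaussian_Ioi]
    norm_num at hsum htail ⊢
    linarith

lemma tsum_le_mul_one_add_sqrt_pi_div {u : ℕ → ℝ} {C b : ℝ} (hb : 0 < b) (hu : ∀ n, 0 ≤ u n)
    (hle : ∀ n, u n ≤ C * exp (-b * (n : ℝ) ^ 2)) : ∑' n, u n ≤ C * (1 + √(π / b) / 2) := by
  have hC : 0 ≤ C := by simpa using (hu 0).trans (hle 0)
  refine Real.tsum_le_of_sum_range_le hu fun N => ?_
  calc ∑ n ∈ Finset.range N, u n ≤ ∑ n ∈ Finset.range N, C * exp (-b * (n : ℝ) ^ 2) :=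
        Finset.sum_le_sum fun n _ => hle n
    _ ≤ C * (1 + √(π / b) / 2) := by
        rw [← Finset.mul_sum]
        exact mul_le_mul_of_nonneg_left (sum_range_exp_neg_mul_sq_le hb N) hC

lemma cos_nat_add_half_mul_pi (n : ℕ) : cos (((n : ℝ) + 1 / 2) * π) = 0 := by
  rw [show ((n : ℝ) + 1 / 2) * π = n * π + π / 2 by ring, cos_add_pi_div_two, sin_nat_mul_pi,
    neg_zero]

lemma nat_le_nat_add_half_mul_pi (n : ℕ) : (n : ℝ) ≤ ((n : ℝ) + 1 / 2) * π := by
  nlinarith [pi_gt_three, (n.cast_nonneg : (0 : ℝ) ≤ n)]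

lemma mul_sinh_mul_nonneg (k : ℝ) {y : ℝ} (hy : 0 ≤ y) : 0 ≤ k * sinh (k * y) := by
  rcases le_total 0 k with hk | hk
  · exact mul_nonneg hk (sinh_nonneg_iff.2 (mul_nonneg hk hy))
  · exact mul_nonneg_of_nonpos_of_nonpos hk
      (sinh_nonpos_iff.2 (mul_nonpos_of_nonpos_of_nonneg hk hy))

noncomputable def coleHopfSteadyState (H ε x : ℝ) : ℝ :=
  cosh (H * (1 - x) / (2 * ε)) / cosh (H / (2 * ε))

lemma hasDerivAt_coleHopfSteadyState (H ε x : ℝ) :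
    HasDerivAt (coleHopfSteadyState H ε)
      (-(H / (2 * ε) * sinh (H / (2 * ε) * (1 - x))) / cosh (H / (2 * ε))) x := by
  have hinner : HasDerivAt (fun y => H * (1 - y) / (2 * ε)) (-(H / (2 * ε))) x :=
    ((((hasDerivAt_id x).const_sub 1).const_mul H).div_const (2 * ε)).congr_deriv (by ring)
  have h := hinner.cosh.div_const (cosh (H / (2 * ε)))
  rw [show H * (1 - x) / (2 * ε) = H / (2 * ε) * (1 - x) by ring] at h
  exact h.congr_deriv (by ring)

lemma coleHopfSteadyState_zero (H ε : ℝ) : coleHopfSteadyState H ε 0 = 1 := by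
  simp [coleHopfSteadyState, (cosh_pos _).ne']

lemma sq_coleHopfSteadyState_zero_sub_le_one (H ε : ℝ) :
    (coleHopfSteadyState H ε 0 - coleHopfSteadyState H ε 1) ^ 2 ≤ 1 := by
  have hc : 1 ≤ cosh (H / (2 * ε)) := one_le_cosh _
  have hinv : 0 < 1 / cosh (H / (2 * ε)) ∧ 1 / cosh (H / (2 * ε)) ≤ 1 :=
    ⟨by positivity, div_le_one_of_le₀ hc (by positivity)⟩
  rw [coleHopfSteadyState_zero]
  simp only [coleHopfSteadyState, sub_self, mul_zero, zero_div, cosh_zero]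
  nlinarith

lemma sq_mul_sq_integral_sub_coleHopfSteadyState_le {u u' : ℝ → ℝ} (H ε : ℝ) (n : ℕ)
    (hu : ∀ x ∈ Icc (0 : ℝ) 1, HasDerivAt u (u' x) x) (hu' : ContinuousOn u' (Icc 0 1))
    (h0 : u 0 = 1) :
    (((n : ℝ) + 1 / 2) * π) ^ 2 * (∫ x in (0 : ℝ)..1,
        (u x - coleHopfSteadyState H ε x) * (√2 * sin ((((n : ℝ) + 1 / 2) * π) * x))) ^ 2
      ≤ 2 * (∫ x in (0 : ℝ)..1, u' x ^ 2) + 4 := by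
  have hderiv_nonpos : ∀ x ∈ Icc (0 : ℝ) 1,
      -(H / (2 * ε) * sinh (H / (2 * ε) * (1 - x))) / cosh (H / (2 * ε)) ≤ 0 := fun x hx =>
    div_nonpos_of_nonpos_of_nonneg (neg_nonpos.2 (mul_sinh_mul_nonneg _ (sub_nonneg.2 hx.2)))
      (cosh_pos _).le
  have := sq_mul_sq_integral_sub_mul_sqrt_two_sin_le (by positivity) (cos_nat_add_half_mul_pi n)
    hu hu' (fun x _ => hasDerivAt_coleHopfSteadyState H ε x) (by fun_prop) hderiv_nonpos
    (h0.trans (coleHopfSteadyState_zero H ε).symm)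
  linarith [sq_coleHopfSteadyState_zero_sub_le_one H ε]

lemma exp_heat_mode_le {ε T : ℝ} (H : ℝ) (hε : 0 < ε) (hT : 0 ≤ T) (n : ℕ) :
    exp (-2 * ε * ((((n : ℝ) + 1 / 2) * π) ^ 2 + H ^ 2 / (4 * ε ^ 2)) * T)
      ≤ exp (-(H ^ 2 * T) / (2 * ε)) * exp (-(2 * ε * T) * (n : ℝ) ^ 2) := by
  rw [← exp_add, exp_le_exp]
  have hsplit : -2 * ε * ((((n : ℝ) + 1 / 2) * π) ^ 2 + H ^ 2 / (4 * ε ^ 2)) * T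
      = -(H ^ 2 * T) / (2 * ε) - 2 * ε * T * (((n : ℝ) + 1 / 2) * π) ^ 2 := by
    field_simp
    ring
  have hsq : (n : ℝ) ^ 2 ≤ (((n : ℝ) + 1 / 2) * π) ^ 2 :=
    pow_le_pow_left₀ n.cast_nonneg (nat_le_nat_add_half_mul_pi n) 2
  have := mul_le_mul_of_nonneg_left hsq (by positivity : 0 ≤ 2 * ε * T)
  linarith

lemma half_sqrt_pi_div_le_one_div {ε T : ℝ} (hε : 0 < ε) (hεT : ε ≤ T) :
    √(π / (2 * ε * T)) / 2 ≤ 1 / ε := by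
  have hT : 0 < T := hε.trans_le hεT
  rw [div_le_iff₀ two_pos, sqrt_le_left (by positivity), div_le_iff₀ (by positivity)]
  field_simp
  nlinarith [pi_lt_four, mul_le_mul_of_nonneg_left hεT hε.le]

theorem heat_convergence_series_bound_general (T H : ℝ) (hT : 0 < T)
    (Z0 Z0' : ℝ → ℝ)
    (hderiv : ∀ x ∈ Set.Icc (0 : ℝ) 1, HasDerivAt Z0 (Z0' x) x)
    (hcont : ContinuousOn Z0' (Set.Icc (0 : ℝ) 1))
    (h0 : Z0 0 = 1) :
    ∃ ε₀ > 0, ∀ ε : ℝ, 0 < ε → ε ≤ ε₀ →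
      (∑' n : ℕ,
          (((n : ℝ) + 1 / 2) * Real.pi) ^ 2 *
            (∫ x in (0 : ℝ)..1,
                (Z0 x - Real.cosh (H * (1 - x) / (2 * ε)) / Real.cosh (H / (2 * ε))) *
                  (Real.sqrt 2 * Real.sin ((((n : ℝ) + 1 / 2) * Real.pi) * x))) ^ 2 *
            Real.exp (-2 * ε * ((((n : ℝ) + 1 / 2) * Real.pi) ^ 2 + H ^ 2 / (4 * ε ^ 2)) * T))
        ≤ (1 / ε + 1) * (16 + 2 * ∫ x in (0 : ℝ)..1, (Z0' x) ^ 2) *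
            Real.exp (-(H ^ 2 * T) / (2 * ε)) := by
  refine ⟨T, hT, fun ε hε hεT => ?_⟩
  set I := ∫ x in (0 : ℝ)..1, Z0' x ^ 2
  set E := exp (-(H ^ 2 * T) / (2 * ε))
  have hI : 0 ≤ I := intervalIntegral.integral_nonneg zero_le_one fun x _ => sq_nonneg _
  have hb : 0 < 2 * ε * T := by positivity
  calc _ ≤ (2 * I + 4) * E * (1 + √(π / (2 * ε * T)) / 2) := by
        refine tsum_le_mul_one_add_sqrt_pi_div hb (fun n => by positivity) fun n => ?_
        calc _ ≤ (2 * I + 4) * (E * exp (-(2 * ε * T) * (n : ℝ) ^ 2)) :=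
              mul_le_mul (sq_mul_sq_integral_sub_coleHopfSteadyState_le H ε n hderiv hcont h0)
                (exp_heat_mode_le H hε hT.le n) (exp_pos _).le (by positivity)
          _ = _ := by ring
    _ = E * ((2 * I + 4) * (1 + √(π / (2 * ε * T)) / 2)) := by ring
    _ ≤ E * ((2 * I + 16) * (1 + 1 / ε)) := by
        gcongr E * ((2 * I + ?_) * (1 + ?_))
        · norm_num
        · exact half_sqrt_pi_div_le_one_div hε hεT
    _ = (1 / ε + 1) * (16 + 2 * I) * E := by ring

/-- Quantitative exponential convergence of the Cole–Hopf heat dynamics towards the steady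
state `H^ε(x) = cosh(H(1−x)/(2ε))/cosh(H/(2ε))`: with `λ_n = (n+1/2)π`, `f_n = √2 sin(λ_n ·)`
and `α_n(ε) = ∫₀¹ (Z⁰ − H^ε) f_n`, for all small enough `ε > 0`,
`∑_{n≥0} λ_n² α_n(ε)² e^{−2ε(λ_n² + H²/(4ε²))T} ≤ (1/ε + 1)(16 + 2∫₀¹ ((Z⁰)')²) e^{−H²T/(2ε)}`. -/
theorem heat_convergence_series_bound (T H : ℝ) (hT : 0 < T) (hH : 0 < H)
    (Z0 Z0' : ℝ → ℝ)
    (hderiv : ∀ x ∈ Set.Icc (0 : ℝ) 1, HasDerivAt Z0 (Z0' x) x)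
    (hcont : ContinuousOn Z0' (Set.Icc (0 : ℝ) 1))
    (h0 : Z0 0 = 1) :
    ∃ ε₀ > 0, ∀ ε : ℝ, 0 < ε → ε ≤ ε₀ →
      (∑' n : ℕ,
          (((n : ℝ) + 1 / 2) * Real.pi) ^ 2 *
            (∫ x in (0 : ℝ)..1,
                (Z0 x - Real.cosh (H * (1 - x) / (2 * ε)) / Real.cosh (H / (2 * ε))) *
                  (Real.sqrt 2 * Real.sin ((((n : ℝ) + 1 / 2) * Real.pi) * x))) ^ 2 *
            Real.exp (-2 * ε * ((((n : ℝ) + 1 / 2) * Real.pi) ^ 2 + H ^ 2 / (4 * ε ^ 2)) * T))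
        ≤ (1 / ε + 1) * (16 + 2 * ∫ x in (0 : ℝ)..1, (Z0' x) ^ 2) *
            Real.exp (-(H ^ 2 * T) / (2 * ε)) :=
  heat_convergence_series_bound_general T H hT Z0 Z0' hderiv hcont h0
end

section
/- Let T > 0, H > 0 and δ ∈ (0, 2). For ε > 0 and n ≥ 1 define c_n(ε) = ∫₀¹ √2·sin(nπx)·(H/ε)·exp(H(x−1)/ε) dx. Then there exist C > 0 and ε₀ > 0 such that for all ε with 0 < ε ≤ ε₀: ∑_{n=1}^{∞} c_n(ε)²·exp(−2n²π²T) ≤ C·ε^{2−δ}. -/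
/-!
Put `a = H/ε`. Reflecting, `sin(nπx) = ±sin(nπ(1 - x))`, so `|sin(nπx)| ≤ nπ(1 - x)`; and against
the boundary layer `a e^{a(x-1)}`, whose mass sits within distance `~1/a` of `x = 1`, the weight
`1 - x` integrates to at most `1/a`. Hence `c_n(ε)² ≤ 2n²π²ε²/H²`, the series is at most
`(2π²/H²) ε² ∑ n² e^{-2n²π²T}`, and `ε² ≤ ε^{2-δ}` once `ε ≤ 1`.
-/

open Real intervalIntegral

lemma abs_sin_nat_mul_pi_mul_le (n : ℕ) (x : ℝ) : |sin (n * π * x)| ≤ n * π * |1 - x| := by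
  have hreflect : (n : ℝ) * π * x = n * π - n * π * (1 - x) := by ring
  rw [hreflect, sin_nat_mul_pi_sub, abs_neg, abs_mul, abs_pow, abs_neg, abs_one, one_pow, one_mul]
  calc |sin (n * π * (1 - x))| ≤ |n * π * (1 - x)| := abs_sin_le_abs
    _ = n * π * |1 - x| := by rw [abs_mul, abs_of_nonneg (by positivity)]

lemma integral_one_sub_mul_exp {a : ℝ} (ha : a ≠ 0) :
    ∫ x in (0 : ℝ)..1, (1 - x) * (a * exp (a * (x - 1))) = 1 / a - (1 + 1 / a) * exp (-a) := by
  have hderiv : ∀ x ∈ Set.uIcc (0 : ℝ) 1,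
      HasDerivAt (fun y => (1 - y + 1 / a) * exp (a * (y - 1)))
        ((1 - x) * (a * exp (a * (x - 1)))) x := by
    intro x _
    refine ((((hasDerivAt_id' x).const_sub 1).add_const (1 / a)).mul
      (((hasDerivAt_id' x).sub_const 1).const_mul a).exp).congr_deriv ?_
    field_simp
    ring
  rw [integral_eq_sub_of_hasDerivAt hderiv (Continuous.intervalIntegrable (by fun_prop) _ _)]
  simp

lemma integral_one_sub_mul_exp_le {a : ℝ} (ha : 0 < a) :
    ∫ x in (0 : ℝ)..1, (1 - x) * (a * exp (a * (x - 1))) ≤ 1 / a := by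
  rw [integral_one_sub_mul_exp ha.ne']
  have : 0 ≤ (1 + 1 / a) * exp (-a) := by positivity
  linarith

lemma abs_integral_sin_mul_exp_le (n : ℕ) {a : ℝ} (ha : 0 < a) :
    |∫ x in (0 : ℝ)..1, √2 * sin (n * π * x) * (a * exp (a * (x - 1)))| ≤ √2 * n * π / a := by
  have hpointwise : ∀ x ∈ Set.Icc (0 : ℝ) 1,
      |√2 * sin (n * π * x) * (a * exp (a * (x - 1)))|
        ≤ √2 * n * π * ((1 - x) * (a * exp (a * (x - 1)))) := by
    rintro x ⟨-, hx1⟩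
    have hsin := abs_sin_nat_mul_pi_mul_le n x
    rw [abs_of_nonneg (sub_nonneg.2 hx1)] at hsin
    rw [abs_mul, abs_mul, abs_of_nonneg (sqrt_nonneg 2),
      abs_of_pos (by positivity : 0 < a * exp (a * (x - 1)))]
    calc √2 * |sin (n * π * x)| * (a * exp (a * (x - 1)))
        ≤ √2 * (n * π * (1 - x)) * (a * exp (a * (x - 1))) := by gcongr
      _ = _ := by ring
  calc _ ≤ ∫ x in (0 : ℝ)..1, √2 * n * π * ((1 - x) * (a * exp (a * (x - 1)))) :=
        (abs_integral_le_integral_abs zero_le_one).trans <| integral_mono_on zero_le_one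
          (Continuous.intervalIntegrable (by fun_prop) _ _)
          (Continuous.intervalIntegrable (by fun_prop) _ _) hpointwise
    _ = √2 * n * π * ∫ x in (0 : ℝ)..1, (1 - x) * (a * exp (a * (x - 1))) :=
        integral_const_mul _ _
    _ ≤ √2 * n * π * (1 / a) := by gcongr; exact integral_one_sub_mul_exp_le ha
    _ = √2 * n * π / a := by ring

lemma sq_integral_sin_mul_exp_le (n : ℕ) {a : ℝ} (ha : 0 < a) :
    (∫ x in (0 : ℝ)..1, √2 * sin (n * π * x) * (a * exp (a * (x - 1)))) ^ 2
      ≤ 2 * π ^ 2 * n ^ 2 / a ^ 2 := by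
  rw [← sq_abs]
  calc _ ≤ (√2 * n * π / a) ^ 2 := by gcongr; exact abs_integral_sin_mul_exp_le n ha
    _ = 2 * π ^ 2 * n ^ 2 / a ^ 2 := by rw [div_pow, mul_pow, mul_pow, sq_sqrt zero_le_two]; ring

lemma summable_sq_mul_exp_neg_mul_sq {κ : ℝ} (hκ : 0 < κ) :
    Summable fun n : ℕ => (n : ℝ) ^ 2 * exp (-κ * n ^ 2) := by
  refine (summable_pow_mul_exp_neg_nat_mul 2 hκ).of_nonneg_of_le (fun n => by positivity)
    fun n => ?_
  have hn : (n : ℝ) ≤ n ^ 2 := by exact_mod_cast Nat.le_self_pow two_ne_zero n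
  gcongr _ * exp ?_
  nlinarith

/-- Dissipation of the boundary layer by the heat equation: with
`c_n(ε) = ∫₀¹ √2 sin(nπx)·(H/ε)e^{H(x−1)/ε} dx` the Fourier coefficients of the boundary
residue in the Dirichlet basis, for every `T > 0` and `δ ∈ (0,2)` there are `C > 0` and
`ε₀ > 0` such that for `0 < ε ≤ ε₀`,
`∑_{n≥1} c_n(ε)² e^{−2n²π²T} ≤ C·ε^{2−δ}`. -/
theorem boundary_layer_dissipation (T H δ : ℝ) (hT : 0 < T) (hH : 0 < H)
    (hδ : δ ∈ Set.Ioo (0 : ℝ) 2)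
    (c : ℝ → ℕ → ℝ)
    (hc : ∀ ε : ℝ, ∀ n : ℕ, c ε n =
      ∫ x in (0 : ℝ)..1,
        Real.sqrt 2 * Real.sin ((n : ℝ) * Real.pi * x) *
          ((H / ε) * Real.exp (H * (x - 1) / ε))) :
    ∃ C > 0, ∃ ε₀ > 0, ∀ ε : ℝ, 0 < ε → ε ≤ ε₀ →
      (∑' n : ℕ, (c ε (n + 1)) ^ 2 *
          Real.exp (-2 * ((n : ℝ) + 1) ^ 2 * Real.pi ^ 2 * T))
        ≤ C * ε ^ (2 - δ) := by
  set e : ℕ → ℝ := fun n => exp (-2 * ((n : ℝ) + 1) ^ 2 * π ^ 2 * T)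
  have he : Summable fun n : ℕ => ((n : ℝ) + 1) ^ 2 * e n :=
    ((summable_nat_add_iff 1).2 (summable_sq_mul_exp_neg_mul_sq
      (by positivity : 0 < 2 * π ^ 2 * T))).congr fun n => by
        simp only [e]; push_cast; ring_nf
  set S := ∑' n : ℕ, ((n : ℝ) + 1) ^ 2 * e n
  have hS : 0 < S := he.tsum_pos (fun n => by positivity) 0 (by positivity)
  refine ⟨2 * π ^ 2 / H ^ 2 * S, by positivity, 1, one_pos, fun ε hε hε1 => ?_⟩
  have hterm : ∀ n : ℕ,
      c ε (n + 1) ^ 2 * e n ≤ 2 * π ^ 2 / H ^ 2 * ε ^ 2 * (((n : ℝ) + 1) ^ 2 * e n) := fun n => by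
    have hcoeff := sq_integral_sin_mul_exp_le (n + 1) (div_pos hH hε)
    calc c ε (n + 1) ^ 2 * e n
        ≤ 2 * π ^ 2 * ((n + 1 : ℕ) : ℝ) ^ 2 / (H / ε) ^ 2 * e n := by
          gcongr; simpa only [hc, mul_div_right_comm H] using hcoeff
      _ = _ := by push_cast; field_simp
  have hε_pow : ε ^ 2 ≤ ε ^ (2 - δ) := by
    rw [← rpow_two]; exact rpow_le_rpow_of_exponent_ge hε hε1 (by linarith [hδ.1])
  calc ∑' n : ℕ, c ε (n + 1) ^ 2 * e n
      ≤ ∑' n : ℕ, 2 * π ^ 2 / H ^ 2 * ε ^ 2 * (((n : ℝ) + 1) ^ 2 * e n) :=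
        Summable.tsum_le_tsum hterm
          ((he.mul_left _).of_nonneg_of_le (fun n => by positivity) hterm) (he.mul_left _)
    _ = 2 * π ^ 2 / H ^ 2 * S * ε ^ 2 := by rw [tsum_mul_left]; ring
    _ ≤ 2 * π ^ 2 / H ^ 2 * S * ε ^ (2 - δ) := by gcongr
end

section
/- Let H > 0 and ε > 0, and define Φ^ε(x) = (H/ε)·(tanh(H(1−x)/(2ε)) − 1). Then for every x ∈ [0,1], exp(−(1/2)·∫₀ˣ Φ^ε(s) ds) = (1 + exp(H(x−1)/ε))/(1 + exp(−H/ε)). -/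
/-!
Since `tanh u - 1 = -2 e^{-2u} / (1 + e^{-2u})`, the residue is `Φ^ε = -2 g'/g` for
`g(x) = 1 + e^{H(x-1)/ε}`, so the Cole–Hopf transform is `exp(∫₀ˣ g'/g) = g(x)/g(0)`.
-/

open Real Set

theorem Real.tanh_sub_one (u : ℝ) :
    tanh u - 1 = -2 * (exp (-(2 * u)) / (1 + exp (-(2 * u)))) := by
  have hu : exp (-u) ^ 2 = exp (-(2 * u)) := by rw [← exp_nat_mul]; ring_nf
  have hpos : 0 < exp u + exp (-u) := by positivity
  rw [tanh_eq, ← hu]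
  have hinv : exp u * exp (-u) = 1 := by rw [← exp_add, add_neg_cancel, exp_zero]
  field_simp
  linear_combination (2 * exp (-u)) * hinv

theorem exp_integral_div_eq_div {g g' : ℝ → ℝ} {a b : ℝ}
    (hg : ∀ s ∈ uIcc a b, HasDerivAt g (g' s) s) (hpos : ∀ s ∈ uIcc a b, 0 < g s)
    (hg' : ContinuousOn g' (uIcc a b)) :
    exp (∫ s in a..b, g' s / g s) = g b / g a := by
  have hcont : ContinuousOn g (uIcc a b) := fun s hs => (hg s hs).continuousAt.continuousWithinAt
  have hint : ∫ s in a..b, g' s / g s = log (g b) - log (g a) :=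
    intervalIntegral.integral_eq_sub_of_hasDerivAt
      (fun s hs => (hg s hs).log (hpos s hs).ne')
      ((hg'.div hcont fun s hs => (hpos s hs).ne').intervalIntegrable)
  rw [hint, exp_sub, exp_log (hpos b right_mem_uIcc), exp_log (hpos a left_mem_uIcc)]

theorem coleHopf_boundary_residue_general (H ε : ℝ)
    (Φ : ℝ → ℝ)
    (hΦ : ∀ x : ℝ, Φ x = (H / ε) * (Real.tanh (H * (1 - x) / (2 * ε)) - 1)) :
    ∀ x ∈ Set.Icc (0 : ℝ) 1,
      Real.exp (-(1 / 2) * ∫ s in (0 : ℝ)..x, Φ s)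
        = (1 + Real.exp (H * (x - 1) / ε)) / (1 + Real.exp (-H / ε)) := by
  intro x _
  set g : ℝ → ℝ := fun y => 1 + exp (H * (y - 1) / ε)
  set g' : ℝ → ℝ := fun y => exp (H * (y - 1) / ε) * (H / ε)
  have hΦ_logDeriv : Φ = fun s => -2 * (g' s / g s) := funext fun s => by
    have harg : -(2 * (H * (1 - s) / (2 * ε))) = H * (s - 1) / ε := by ring
    rw [hΦ, tanh_sub_one, harg]
    ring
  have hg : ∀ s, HasDerivAt g (g' s) s := fun s => by
    have hlin : HasDerivAt (fun y => H * (y - 1) / ε) (H / ε) s := by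
      simpa using (((hasDerivAt_id s).sub_const 1).const_mul H).div_const ε
    exact hlin.exp.const_add 1
  have hg' : Continuous g' := by fun_prop
  rw [hΦ_logDeriv, intervalIntegral.integral_const_mul, ← mul_assoc,
    show -(1 / 2) * -2 = (1 : ℝ) by norm_num, one_mul,
    exp_integral_div_eq_div (fun s _ => hg s) (fun s _ => by positivity) hg'.continuousOn]
  simp only [g, zero_sub, mul_neg_one]

/-- Closed form of the Cole–Hopf transform of the boundary residue
`Φ^ε(x) = (H/ε)(tanh(H(1−x)/(2ε)) − 1)`: for every `x ∈ [0,1]`,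
`exp(−(1/2)∫₀ˣ Φ^ε) = (1 + e^{H(x−1)/ε})/(1 + e^{−H/ε})`. -/
theorem coleHopf_boundary_residue (H ε : ℝ) (hH : 0 < H) (hε : 0 < ε)
    (Φ : ℝ → ℝ)
    (hΦ : ∀ x : ℝ, Φ x = (H / ε) * (Real.tanh (H * (1 - x) / (2 * ε)) - 1)) :
    ∀ x ∈ Set.Icc (0 : ℝ) 1,
      Real.exp (-(1 / 2) * ∫ s in (0 : ℝ)..x, Φ s)
        = (1 + Real.exp (H * (x - 1) / ε)) / (1 + Real.exp (-H / ε)) :=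
  coleHopf_boundary_residue_general H ε Φ hΦ
end
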